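/- arXiv:1910.13242 — 2 statements merged into one kernel-verified Lean document; each statement's English description precedes it below -/
import Mathlib

section
/- In any optimal solution of the sum throughput maximization problem, for every user k with τₖ > 0, either Pₖ = P_max or Pₖ·τₖ = Bₖ + Cₖ·Σ_{j≤k} τⱼ (energy causality tight). Equivalently: if Pₖ < P_max and Pₖ·τₖ < Bₖ + Cₖ·Σ_{j≤k} τⱼ for some k with τₖ > 0, the solution is not optimal, since increasing Pₖ (keeping τₖ fixed) up to min{P_max, (Bₖ + Cₖ·Σ_{j≤k} τⱼ)/τₖ} strictly increases the objective while preserving feasibility. -/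
open Finset

/-- Feasibility for the sum throughput maximization problem (fixed order). -/
def Feasible (N : ℕ) (B C : Fin N → ℝ) (Pmax : ℝ) (τ P : Fin N → ℝ) : Prop :=
  (∀ i, 0 ≤ τ i) ∧ (∀ i, 0 ≤ P i ∧ P i ≤ Pmax) ∧ (∑ i, τ i ≤ 1) ∧
  ∀ i, B i + C i * ∑ j ∈ Iic i, τ j - P i * τ i ≥ 0

/-- Sum throughput objective. -/
noncomputable def Obj (N : ℕ) (k : Fin N → ℝ) (W : ℝ) (τ P : Fin N → ℝ) : ℝ :=
  ∑ i, W * τ i * Real.logb 2 (1 + k i * P i)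

/-- Lemma 4: in an optimal solution, every transmitting user either transmits at
maximum power or drains all its available energy. -/
theorem stmt_5 (N : ℕ) (B C k : Fin N → ℝ) (W Pmax : ℝ)
    (hW : 0 < W) (hPmax : 0 < Pmax)
    (hB : ∀ i, 0 ≤ B i) (hC : ∀ i, 0 ≤ C i) (hk : ∀ i, 0 < k i)
    (τ P : Fin N → ℝ) (hF : Feasible N B C Pmax τ P)
    (hopt : ∀ τ' P', Feasible N B C Pmax τ' P' → Obj N k W τ' P' ≤ Obj N k W τ P) :
    ∀ m : Fin N, 0 < τ m →
      P m = Pmax ∨ P m * τ m = B m + C m * ∑ j ∈ Iic m, τ j := by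
  intro m hτm
  by_contra hcon
  push_neg at hcon
  obtain ⟨hne1, hne2⟩ := hcon
  obtain ⟨hτ0, hP, hτsum, hE⟩ := hF
  set E := B m + C m * ∑ j ∈ Iic m, τ j with hEdef
  have hEm : E - P m * τ m ≥ 0 := hE m
  have hPmlt : P m < Pmax := lt_of_le_of_ne (hP m).2 hne1
  have hEgt : P m * τ m < E := lt_of_le_of_ne (by linarith) hne2
  have hQlt : P m < min Pmax (E / τ m) := by
    apply lt_min hPmlt
    rw [lt_div_iff₀ hτm]
    linarith
  set Q := min Pmax (E / τ m) with hQdef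
  set P' := Function.update P m Q with hP'def
  have hfeas : Feasible N B C Pmax τ P' := by
    refine ⟨hτ0, ?_, hτsum, ?_⟩
    · intro i
      by_cases hi : i = m
      · subst hi
        simp only [hP'def, Function.update_self]
        constructor
        · exact le_trans (le_trans (hP i).1 hQlt.le) le_rfl
        · exact min_le_left _ _
      · simp only [hP'def, Function.update_of_ne hi]; exact hP i
    · intro i
      by_cases hi : i = m
      · subst hi
        simp only [hP'def, Function.update_self]
        have hQle : Q * τ i ≤ E := by
          have h := min_le_right Pmax (E / τ i)
          calc Q * τ i ≤ (E / τ i) * τ i :=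
                mul_le_mul_of_nonneg_right h (hτ0 i)
            _ = E := by field_simp
        linarith
      · simp only [hP'def, Function.update_of_ne hi]; exact hE i
  have hobj : Obj N k W τ P < Obj N k W τ P' := by
    unfold Obj
    apply Finset.sum_lt_sum
    · intro i _
      by_cases hi : i = m
      · subst hi
        simp only [hP'def, Function.update_self]
        apply mul_le_mul_of_nonneg_left _ (by positivity)
        have h1 : (0:ℝ) < 1 + k i * P i := by nlinarith [(hk i), (hP i).1]
        exact Real.logb_le_logb_of_le one_lt_two h1 (by nlinarith [(hk i)])
      · simp only [hP'def, Function.update_of_ne hi]; exact le_rfl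
    · refine ⟨m, Finset.mem_univ m, ?_⟩
      simp only [hP'def, Function.update_self]
      have h1 : (0:ℝ) < 1 + k m * P m := by nlinarith [(hk m), (hP m).1]
      have h2 : 1 + k m * P m < 1 + k m * Q := by nlinarith [(hk m)]
      have hlog := Real.logb_lt_logb one_lt_two h1 h2
      have : 0 < W * τ m := by positivity
      exact mul_lt_mul_of_pos_left hlog this
  exact absurd (hopt τ P' hfeas) (not_le.mpr hobj)
end

section
/- Let user k satisfy r_k^max = maxᵢ r_i^max where r_i^max = W·log₂(1 + kᵢ·P_max), and suppose Bₖ/(P_max − Cₖ) ≥ 1 with Cₖ < P_max. Then the single-user schedule τₖ = 1, Pₖ = P_max (and τᵢ = 0 for all i ≠ k) is feasible and achieves sum throughput r_k^max, which is an upper bound on the objective of any feasible solution; hence this schedule is optimal. -/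
open Finset

/-- Corollary 2: if the maximum-rate user m satisfies Bₘ/(P_max − Cₘ) ≥ 1 with
Cₘ < P_max, then the single-user schedule τₘ = 1, Pₘ = P_max is feasible and its
throughput r_m^max upper-bounds every feasible solution; hence it is optimal. -/
theorem stmt_7 (N : ℕ) (B C k : Fin N → ℝ) (W Pmax : ℝ)
    (hW : 0 < W) (hPmax : 0 < Pmax)
    (hB : ∀ i, 0 ≤ B i) (hC : ∀ i, 0 ≤ C i) (hk : ∀ i, 0 < k i)
    (m : Fin N)
    (hmax : ∀ i, W * Real.logb 2 (1 + k i * Pmax) ≤ W * Real.logb 2 (1 + k m * Pmax))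
    (hCm : C m < Pmax) (hbat : B m / (Pmax - C m) ≥ 1) :
    let τ : Fin N → ℝ := fun i => if i = m then 1 else 0
    let P : Fin N → ℝ := fun i => if i = m then Pmax else 0
    Feasible N B C Pmax τ P ∧
    Obj N k W τ P = W * Real.logb 2 (1 + k m * Pmax) ∧
    ∀ τ' P', Feasible N B C Pmax τ' P' →
      Obj N k W τ' P' ≤ W * Real.logb 2 (1 + k m * Pmax) := by
  intro τ P
  have hBm : B m ≥ Pmax - C m := by
    have h := (one_le_div (sub_pos.mpr hCm)).mp hbat
    linarith
  have hRm : 0 ≤ W * Real.logb 2 (1 + k m * Pmax) := by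
    apply mul_nonneg hW.le
    apply Real.logb_nonneg one_lt_two
    nlinarith [(hk m).le, hPmax.le]
  refine ⟨⟨?_, ?_, ?_, ?_⟩, ?_, ?_⟩
  · intro i; simp only [τ]; split <;> norm_num
  · intro i; simp only [P]; split <;> constructor <;> first | linarith | norm_num
  · rw [Finset.sum_ite_eq' univ m (fun _ => (1:ℝ))]; simp
  · intro i
    by_cases hi : i = m
    · subst hi
      have hτsum : ∑ j ∈ Iic i, τ j = 1 := by
        rw [Finset.sum_ite_eq' (Iic i) i (fun _ => (1:ℝ))]
        simp [Finset.mem_Iic]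
      simp only [τ, P, if_pos rfl, hτsum]
      linarith
    · simp only [τ, P, if_neg hi]
      have : 0 ≤ C i * ∑ j ∈ Iic i, τ j := by
        apply mul_nonneg (hC i)
        apply Finset.sum_nonneg
        intro j _; simp only [τ]; split <;> norm_num
      nlinarith [hB i]
  · unfold Obj
    rw [Finset.sum_eq_single m]
    · simp [τ, P]
    · intro i _ hi; simp [τ, P, if_neg hi]
    · simp
  · intro τ' P' ⟨hτ', hP', hsum', _⟩
    unfold Obj
    calc ∑ i, W * τ' i * Real.logb 2 (1 + k i * P' i)
        ≤ ∑ i, τ' i * (W * Real.logb 2 (1 + k m * Pmax)) := by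
          apply Finset.sum_le_sum
          intro i _
          have h1 : Real.logb 2 (1 + k i * P' i) ≤ Real.logb 2 (1 + k i * Pmax) := by
            have hy : (0:ℝ) < 1 + k i * Pmax := by nlinarith [(hk i).le]
            have hx : (0:ℝ) < 1 + k i * P' i := by nlinarith [(hk i).le, (hP' i).1]
            exact (Real.logb_le_logb one_lt_two hx hy).mpr
              (by nlinarith [(hk i).le, (hP' i).2])
          have h2 : W * Real.logb 2 (1 + k i * P' i) ≤ W * Real.logb 2 (1 + k m * Pmax) :=
            le_trans (by nlinarith) (hmax i)
          calc W * τ' i * Real.logb 2 (1 + k i * P' i)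
              = τ' i * (W * Real.logb 2 (1 + k i * P' i)) := by ring
            _ ≤ τ' i * (W * Real.logb 2 (1 + k m * Pmax)) :=
                mul_le_mul_of_nonneg_left h2 (hτ' i)
      _ = (∑ i, τ' i) * (W * Real.logb 2 (1 + k m * Pmax)) := by
          rw [Finset.sum_mul]
      _ ≤ 1 * (W * Real.logb 2 (1 + k m * Pmax)) :=
          mul_le_mul_of_nonneg_right hsum' hRm
      _ = _ := one_mul _
end
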